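/- arXiv:2012.10469 — 5 statements merged into one kernel-verified Lean document; each statement's English description precedes it below -/
import Mathlib

section
/- Von Neumann's trace inequality for symmetric matrices: for any n×n real symmetric matrices X and Y, Tr(XY) ≤ Σ_{i=1}^n λ_i(X)λ_i(Y), where eigenvalues are ordered non-increasingly. -/
/-!
Diagonalize `X = U diag(a) Uᵀ` and `Y = V diag(b) Vᵀ` with `U`, `V` orthogonal. Then
`Tr(XY) = ∑ i j, W i j ^ 2 * a i * b j` for the orthogonal matrix `W = Uᵀ V`, whose entrywise
square is doubly stochastic. By Birkhoff's theorem the right-hand side is a convex combination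
of the values `∑ i, a i * b (π i)` at permutations `π`, and by the rearrangement inequality
each of these is at most the corresponding sum for the non-increasingly sorted eigenvalues.
-/

open Matrix

/-- Eigenvalues of a real symmetric matrix sorted in non-increasing order. -/
noncomputable def eigDesc {n : ℕ} {A : Matrix (Fin n) (Fin n) ℝ} (hA : A.IsHermitian) :
    Fin n → ℝ :=
  fun i => hA.eigenvalues (Tuple.sort hA.eigenvalues (Fin.rev i))

namespace Matrix

variable {ι : Type*} [Fintype ι]

theorem comp_vecMul_dotProduct_comp {α : Type*} [CommSemiring α] (D : Matrix ι ι α)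
    (f g : ι → α) (σ τ : Equiv.Perm ι) :
    (f ∘ σ) ᵥ* D ⬝ᵥ (g ∘ τ) = f ᵥ* D.reindex σ τ ⬝ᵥ g := by
  rw [reindex_apply, submatrix_vecMul_equiv, Equiv.symm_symm, comp_equiv_symm_dotProduct]

variable [DecidableEq ι]

theorem trace_mul_diagonal_mul_transpose {α : Type*} [CommRing α] (U V : Matrix ι ι α)
    (a b : ι → α) :
    (U * diagonal a * Uᵀ * (V * diagonal b * Vᵀ)).trace =
      a ᵥ* ((Uᵀ * V) ⊙ (Uᵀ * V)) ⬝ᵥ b := by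
  rw [dotProduct_vecMul_hadamard, transpose_mul, transpose_mul, transpose_transpose,
    diagonal_transpose]
  simp only [Matrix.mul_assoc]
  rw [trace_mul_comm]
  simp only [Matrix.mul_assoc]

theorem hadamard_self_mem_doublyStochastic {W : Matrix ι ι ℝ} (hW : W ∈ unitaryGroup ι ℝ) :
    W ⊙ W ∈ doublyStochastic ℝ ι := by
  have hrow : W * Wᵀ = 1 := by
    simpa [star_eq_conjTranspose] using mem_unitaryGroup_iff.mp hW
  have hcol : Wᵀ * W = 1 := by
    simpa [star_eq_conjTranspose] using mem_unitaryGroup_iff'.mp hW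
  refine mem_doublyStochastic_iff_sum.mpr ⟨fun i j => mul_self_nonneg (W i j), fun i => ?_,
    fun j => ?_⟩
  · simpa [mul_apply] using congrFun (congrFun hrow i) i
  · simpa [mul_apply] using congrFun (congrFun hcol j) j

theorem vecMul_dotProduct_le_of_mem_doublyStochastic {R : Type*} [Field R] [LinearOrder R]
    [IsStrictOrderedRing R] {D : Matrix ι ι R} (hD : D ∈ doublyStochastic R ι) {f g : ι → R}
    (hfg : Monovary f g) : f ᵥ* D ⬝ᵥ g ≤ f ⬝ᵥ g := by
  have hlin : IsLinearMap R fun M : Matrix ι ι R => f ᵥ* M ⬝ᵥ g :=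
    ⟨fun M N => by simp only [vecMul_add, add_dotProduct],
      fun c M => by simp only [vecMul_smul, smul_dotProduct]⟩
  rw [← SetLike.mem_coe, doublyStochastic_eq_convexHull_permMatrix] at hD
  refine convexHull_min ?_ (convex_halfSpace_le hlin _) hD
  rintro _ ⟨σ, rfl⟩
  show f ᵥ* σ.permMatrix R ⬝ᵥ g ≤ f ⬝ᵥ g
  rw [vecMul_permMatrix, comp_equiv_symm_dotProduct]
  exact hfg.sum_smul_comp_perm_le_sum_smul

namespace IsHermitian

theorem eq_mul_diagonal_mul_transpose {A : Matrix ι ι ℝ} (hA : A.IsHermitian) :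
    A = (hA.eigenvectorUnitary : Matrix ι ι ℝ) * diagonal hA.eigenvalues *
      (hA.eigenvectorUnitary : Matrix ι ι ℝ)ᵀ := by
  simpa [star_eq_conjTranspose] using hA.spectral_theorem

theorem exists_mem_unitaryGroup_trace_mul_eq {A B : Matrix ι ι ℝ} (hA : A.IsHermitian)
    (hB : B.IsHermitian) : ∃ W ∈ unitaryGroup ι ℝ,
      (A * B).trace = hA.eigenvalues ᵥ* (W ⊙ W) ⬝ᵥ hB.eigenvalues := by
  refine ⟨(star hA.eigenvectorUnitary * hB.eigenvectorUnitary : unitaryGroup ι ℝ),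
    SetLike.coe_mem _, ?_⟩
  rw [Submonoid.coe_mul, Unitary.coe_star, star_eq_conjTranspose,
    conjTranspose_eq_transpose_of_trivial, ← trace_mul_diagonal_mul_transpose,
    ← hA.eq_mul_diagonal_mul_transpose, ← hB.eq_mul_diagonal_mul_transpose]

end IsHermitian

end Matrix

theorem antitone_eigDesc {n : ℕ} {A : Matrix (Fin n) (Fin n) ℝ} (hA : A.IsHermitian) :
    Antitone (eigDesc hA) :=
  (Tuple.monotone_sort hA.eigenvalues).comp_antitone Fin.rev_anti

theorem exists_perm_eigenvalues_eq_eigDesc_comp {n : ℕ} {A : Matrix (Fin n) (Fin n) ℝ}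
    (hA : A.IsHermitian) : ∃ σ : Equiv.Perm (Fin n), hA.eigenvalues = eigDesc hA ∘ σ :=
  ⟨(Fin.revPerm.trans (Tuple.sort hA.eigenvalues)).symm, by ext; simp [eigDesc]⟩

/-- Von Neumann's trace inequality for real symmetric matrices:
`Tr(XY) ≤ ∑ i, λ_i(X) λ_i(Y)` with eigenvalues ordered non-increasingly. -/
theorem vonNeumann_trace_inequality {n : ℕ} {X Y : Matrix (Fin n) (Fin n) ℝ}
    (hX : X.IsHermitian) (hY : Y.IsHermitian) :
    (X * Y).trace ≤ ∑ i, eigDesc hX i * eigDesc hY i := by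
  obtain ⟨W, hW, htrace⟩ := hX.exists_mem_unitaryGroup_trace_mul_eq hY
  obtain ⟨σ, hσ⟩ := exists_perm_eigenvalues_eq_eigDesc_comp hX
  obtain ⟨τ, hτ⟩ := exists_perm_eigenvalues_eq_eigDesc_comp hY
  calc (X * Y).trace = eigDesc hX ᵥ* (W ⊙ W).reindex σ τ ⬝ᵥ eigDesc hY := by
        rw [htrace, hσ, hτ, comp_vecMul_dotProduct_comp]
    _ ≤ ∑ i, eigDesc hX i * eigDesc hY i :=
        vecMul_dotProduct_le_of_mem_doublyStochastic
          (reindex_mem_doublyStochastic (hadamard_self_mem_doublyStochastic hW))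
          ((antitone_eigDesc hX).monovary (antitone_eigDesc hY))
end

section
/- If X* is an optimal solution of rank r* to the problem of minimizing a convex differentiable function f over the spectrahedron S_n, with eigen-decomposition X* = Σ_{i=1}^{r*} λ_i v_i v_i^T, then each eigenvector v_i (i ≤ r*) is an eigenvector of ∇f(X*) corresponding to its smallest eigenvalue λ_n(∇f(X*)). -/
/-!
First-order optimality at `X*`, tested against `Y = w wᵀ` for a unit eigenvector `w` of the
smallest eigenvalue `λ` of `G = ∇f(X*)`, gives `⟨G, X*⟩ ≤ λ`. Hence
`⟨G - λ I, X*⟩ = ∑ μᵢ vᵢᵀ (G - λ I) vᵢ ≤ 0`; all terms are nonnegative since `G - λ I ⪰ 0`, so each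
`vᵢ` lies in the kernel of `G - λ I`.
-/

open Set Matrix

open scoped MatrixOrder ComplexOrder

theorem IsMinOn.nonneg_of_hasDerivAt_along_segment {E : Type*} [AddCommGroup E] [Module ℝ E]
    {f : E → ℝ} {s : Set E} (hs : Convex ℝ s) {x y : E} (hx : x ∈ s) (hy : y ∈ s)
    (hmin : IsMinOn f s x) {d : ℝ} (hd : HasDerivAt (fun t : ℝ => f (x + t • (y - x))) d 0) :
    0 ≤ d := by
  have hmin_line : IsMinOn (fun t : ℝ => f (x + t • (y - x))) (Icc 0 1) 0 := fun t ht => by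
    simpa using hmin (hs.add_smul_sub_mem hx hy ht)
  have hcone : (1 : ℝ) ∈ posTangentConeAt (Icc (0 : ℝ) 1) 0 :=
    mem_posTangentConeAt_of_segment_subset (by simp [segment_eq_Icc])
  simpa using hmin_line.localize.hasFDerivWithinAt_nonneg hd.hasDerivWithinAt.hasFDerivWithinAt hcone

def spectrahedron (ι : Type*) [Fintype ι] : Set (Matrix ι ι ℝ) :=
  {X | X.PosSemidef ∧ X.trace = 1}

section Spectrahedron

variable {ι : Type*} [Fintype ι]

theorem convex_spectrahedron : Convex ℝ (spectrahedron ι) := by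
  intro X hX Y hY a b ha hb hab
  exact ⟨(hX.1.smul ha).add (hY.1.smul hb), by simp [trace_add, trace_smul, hX.2, hY.2, hab]⟩

theorem IsMinOn.trace_mul_le_of_mem_spectrahedron {f : Matrix ι ι ℝ → ℝ} {G X Y : Matrix ι ι ℝ}
    (hmin : IsMinOn f (spectrahedron ι) X) (hX : X ∈ spectrahedron ι) (hY : Y ∈ spectrahedron ι)
    (hgrad : HasDerivAt (fun t : ℝ => f (X + t • (Y - X))) (G * (Y - X)).trace 0) :
    (G * X).trace ≤ (G * Y).trace := by
  have := hmin.nonneg_of_hasDerivAt_along_segment convex_spectrahedron hX hY hgrad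
  rwa [Matrix.mul_sub, trace_sub, sub_nonneg] at this

theorem Matrix.IsHermitian.exists_mem_spectrahedron_trace_mul_eq_iInf [DecidableEq ι] [Nonempty ι]
    {G : Matrix ι ι ℝ} (hG : G.IsHermitian) :
    ∃ Y ∈ spectrahedron ι, (G * Y).trace = ⨅ j, hG.eigenvalues j := by
  obtain ⟨j, hj⟩ := exists_eq_ciInf_of_finite (f := hG.eigenvalues)
  set w : ι → ℝ := ⇑(hG.eigenvectorBasis j)
  have hw : w ⬝ᵥ w = 1 := by
    have := orthonormal_iff_ite.1 hG.eigenvectorBasis.orthonormal j j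
    rwa [if_pos rfl, EuclideanSpace.inner_eq_star_dotProduct, star_trivial] at this
  refine ⟨vecMulVec w w, ⟨?_, by rw [trace_vecMulVec, hw]⟩, ?_⟩
  · simpa using posSemidef_vecMulVec_self_star w
  · rw [mul_vecMulVec, trace_vecMulVec, hG.mulVec_eigenvectorBasis, smul_dotProduct, hw, hj,
      smul_eq_mul, mul_one]

end Spectrahedron

theorem Matrix.IsHermitian.posSemidef_sub_smul_one {ι 𝕜 : Type*} [Fintype ι] [DecidableEq ι]
    [RCLike 𝕜] {A : Matrix ι ι 𝕜} (hA : A.IsHermitian) {c : ℝ} (hc : ∀ j, c ≤ hA.eigenvalues j) :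
    (A - c • (1 : Matrix ι ι 𝕜)).PosSemidef := by
  have hle : algebraMap ℝ (Matrix ι ι 𝕜) c ≤ A := by
    rw [algebraMap_le_iff_le_spectrum hA, hA.spectrum_real_eq_range_eigenvalues]
    rintro _ ⟨j, rfl⟩
    exact hc j
  rwa [Algebra.algebraMap_eq_smul_one, Matrix.le_iff] at hle

theorem Matrix.trace_mul_sum_smul_vecMulVec {ι κ : Type*} [Fintype ι] [Fintype κ]
    (M : Matrix ι ι ℝ) (μ : κ → ℝ) (v : κ → ι → ℝ) :
    (M * ∑ i, μ i • vecMulVec (v i) (v i)).trace = ∑ i, μ i * (v i ⬝ᵥ M *ᵥ v i) := by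
  simp only [Matrix.mul_sum, trace_sum, Matrix.mul_smul, trace_smul, mul_vecMulVec,
    trace_vecMulVec, dotProduct_comm, smul_eq_mul]

theorem Matrix.PosSemidef.mulVec_eq_zero_of_trace_mul_sum_nonpos {ι κ : Type*} [Fintype ι]
    [Fintype κ] {M : Matrix ι ι ℝ} (hM : M.PosSemidef) {μ : κ → ℝ} {v : κ → ι → ℝ}
    (hμ : ∀ i, 0 < μ i) (h : (M * ∑ i, μ i • vecMulVec (v i) (v i)).trace ≤ 0) (i : κ) :
    M *ᵥ v i = 0 := by
  have hterm : ∀ i ∈ Finset.univ, 0 ≤ μ i * (v i ⬝ᵥ M *ᵥ v i) := fun i _ =>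
    mul_nonneg (hμ i).le (by simpa using hM.dotProduct_mulVec_nonneg (v i))
  rw [trace_mul_sum_smul_vecMulVec] at h
  have hzero := (Finset.sum_eq_zero_iff_of_nonneg hterm).1
    (le_antisymm h (Finset.sum_nonneg hterm)) i (Finset.mem_univ i)
  rw [← hM.dotProduct_mulVec_zero_iff, star_trivial]
  exact (mul_eq_zero.1 hzero).resolve_left (hμ i).ne'

theorem optimal_eigvecs_are_bottom_eigvecs_of_grad_general {n r : ℕ}
    (f : Matrix (Fin n) (Fin n) ℝ → ℝ)
    {Xs G : Matrix (Fin n) (Fin n) ℝ}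
    (hXs : Xs.PosSemidef) (hXstr : Xs.trace = 1)
    (hmin : ∀ Y : Matrix (Fin n) (Fin n) ℝ, Y.PosSemidef → Y.trace = 1 → f Xs ≤ f Y)
    (hG : G.IsHermitian)
    (hgrad : ∀ H : Matrix (Fin n) (Fin n) ℝ,
      HasDerivAt (fun t : ℝ => f (Xs + t • H)) ((G * H).trace) 0)
    (μ : Fin r → ℝ) (v : Fin r → Fin n → ℝ)
    (hμ : ∀ i, 0 < μ i)
    (hdecomp : Xs = ∑ i, μ i • Matrix.vecMulVec (v i) (v i)) :
    ∀ i, G.mulVec (v i) = (⨅ j, hG.eigenvalues j) • v i := by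
  intro i
  have : Nonempty (Fin n) := (isEmpty_or_nonempty _).resolve_left fun _ => by simp at hXstr
  set c := ⨅ j, hG.eigenvalues j
  obtain ⟨Y, hY, hGY⟩ := hG.exists_mem_spectrahedron_trace_mul_eq_iInf
  have hGXs : (G * Xs).trace ≤ c :=
    (IsMinOn.trace_mul_le_of_mem_spectrahedron (fun Z hZ => hmin Z hZ.1 hZ.2) ⟨hXs, hXstr⟩ hY
      (hgrad _)).trans_eq hGY
  have hshift : ((G - c • 1) * Xs).trace ≤ 0 := by
    rw [Matrix.sub_mul, trace_sub, smul_mul, one_mul, trace_smul, hXstr, smul_eq_mul, mul_one]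
    linarith
  rw [hdecomp] at hshift
  have hker := (hG.posSemidef_sub_smul_one fun j => ciInf_le (Finite.bddBelow_range _) j
    ).mulVec_eq_zero_of_trace_mul_sum_nonpos hμ hshift i
  rwa [sub_mulVec, smul_mulVec, one_mulVec, sub_eq_zero] at hker

/-- If `X*` is an optimal solution of rank `r*` to minimizing a convex
differentiable `f` over the spectrahedron, with eigendecomposition
`X* = ∑ μ_i v_i v_iᵀ` (`μ_i > 0`, `v_i` orthonormal), then each `v_i` is an eigenvector
of the (symmetric) gradient `G = ∇f(X*)` corresponding to its smallest eigenvalue. -/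
theorem optimal_eigvecs_are_bottom_eigvecs_of_grad {n r : ℕ}
    (f : Matrix (Fin n) (Fin n) ℝ → ℝ)
    (hf : ConvexOn ℝ Set.univ f)
    {Xs G : Matrix (Fin n) (Fin n) ℝ}
    (hXs : Xs.PosSemidef) (hXstr : Xs.trace = 1)
    (hmin : ∀ Y : Matrix (Fin n) (Fin n) ℝ, Y.PosSemidef → Y.trace = 1 → f Xs ≤ f Y)
    (hG : G.IsHermitian)
    (hgrad : ∀ H : Matrix (Fin n) (Fin n) ℝ,
      HasDerivAt (fun t : ℝ => f (Xs + t • H)) ((G * H).trace) 0)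
    (hrank : Xs.rank = r)
    (μ : Fin r → ℝ) (v : Fin r → Fin n → ℝ)
    (hμ : ∀ i, 0 < μ i)
    (hortho : ∀ i j, v i ⬝ᵥ v j = if i = j then (1 : ℝ) else 0)
    (hdecomp : Xs = ∑ i, μ i • Matrix.vecMulVec (v i) (v i)) :
    ∀ i, G.mulVec (v i) = (⨅ j, hG.eigenvalues j) • v i :=
  optimal_eigvecs_are_bottom_eigvecs_of_grad_general f hXs hXstr hmin hG hgrad μ v hμ hdecomp
end

section
/- If a rank-r* optimal solution X* to min_{X ∈ S_n} f(X) satisfies the first-order optimality condition, then ⟨X*, ∇f(X*)⟩ = λ_n(∇f(X*)), i.e., the inner product of the optimal solution with its gradient equals the smallest eigenvalue of the gradient. -/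
/-!
Testing the first-order condition against the projector `v vᵀ` onto a unit eigenvector `v` for
the smallest eigenvalue of `G` gives `tr (G X*) ≤ λ_min`. Conversely, writing a PSD matrix `X` in
an eigenbasis of `G` as `P = Uᴴ X U`, one gets `tr (G X) = ∑ λᵢ Pᵢᵢ` with `Pᵢᵢ ≥ 0` and
`∑ Pᵢᵢ = tr X`, so `tr (G X) ≥ λ_min · tr X`.
-/

open Matrix

namespace Matrix.IsHermitian

variable {n : Type*} [Fintype n] [DecidableEq n] {G : Matrix n n ℝ} (hG : G.IsHermitian)
include hG

lemma trace_mul_eq_sum_eigenvalues_mul_diag (X : Matrix n n ℝ) :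
    (G * X).trace = ∑ i, hG.eigenvalues i *
      (star (hG.eigenvectorUnitary : Matrix n n ℝ) * X * hG.eigenvectorUnitary) i i := by
  set U : Matrix n n ℝ := ↑hG.eigenvectorUnitary
  have hGU : G = U * diagonal hG.eigenvalues * star U := by
    simpa using hG.spectral_theorem
  calc (G * X).trace = (U * (diagonal hG.eigenvalues * (star U * X))).trace := by
        conv_lhs => rw [hGU]
        simp only [Matrix.mul_assoc]
    _ = (diagonal hG.eigenvalues * (star U * X * U)).trace := by
        rw [trace_mul_comm]
        simp only [Matrix.mul_assoc]
    _ = _ := by simp [trace]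

lemma iInf_eigenvalues_mul_trace_le_trace_mul {X : Matrix n n ℝ} (hX : X.PosSemidef) :
    (⨅ i, hG.eigenvalues i) * X.trace ≤ (G * X).trace := by
  set U : Matrix n n ℝ := ↑hG.eigenvectorUnitary
  set P := star U * X * U
  have hP : P.PosSemidef := by
    simpa [P, star_eq_conjTranspose] using hX.conjTranspose_mul_mul_same U
  have hP_trace : P.trace = X.trace := by
    rw [trace_mul_cycle, Unitary.mul_star_self_of_mem hG.eigenvectorUnitary.2, Matrix.one_mul]
  rw [hG.trace_mul_eq_sum_eigenvalues_mul_diag, ← hP_trace, trace, Finset.mul_sum]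
  exact Finset.sum_le_sum fun i _ => mul_le_mul_of_nonneg_right
    (ciInf_le (Set.finite_range _).bddBelow i) hP.diag_nonneg

lemma dotProduct_eigenvectorBasis_self (j : n) :
    (hG.eigenvectorBasis j).ofLp ⬝ᵥ (hG.eigenvectorBasis j).ofLp = 1 := by
  have h := orthonormal_iff_ite.mp hG.eigenvectorBasis.orthonormal j j
  rwa [if_pos rfl, EuclideanSpace.inner_eq_star_dotProduct, star_trivial] at h

lemma exists_posSemidef_trace_eq_one_trace_mul_eq_eigenvalues (j : n) :
    ∃ Y : Matrix n n ℝ, Y.PosSemidef ∧ Y.trace = 1 ∧ (G * Y).trace = hG.eigenvalues j := by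
  set v := (hG.eigenvectorBasis j).ofLp
  refine ⟨vecMulVec v v, ?_, ?_, ?_⟩
  · simpa using posSemidef_vecMulVec_self_star v
  · rw [trace_vecMulVec, hG.dotProduct_eigenvectorBasis_self]
  · rw [mul_vecMulVec, trace_vecMulVec, mulVec_eigenvectorBasis, smul_dotProduct,
      hG.dotProduct_eigenvectorBasis_self, smul_eq_mul, mul_one]

end Matrix.IsHermitian

theorem inner_opt_grad_eq_min_eigenvalue_general {n : ℕ}
    {Xs G : Matrix (Fin n) (Fin n) ℝ}
    (hXs : Xs.PosSemidef) (hXstr : Xs.trace = 1)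
    (hG : G.IsHermitian)
    (hfoc : ∀ X : Matrix (Fin n) (Fin n) ℝ, X.PosSemidef → X.trace = 1 →
      0 ≤ (G * (X - Xs)).trace) :
    (Xs * G).trace = ⨅ j, hG.eigenvalues j := by
  have : Nonempty (Fin n) := by
    rcases isEmpty_or_nonempty (Fin n) with h | h
    · simp [trace] at hXstr
    · exact h
  obtain ⟨j, hj⟩ := exists_eq_ciInf_of_finite (f := hG.eigenvalues)
  obtain ⟨Y, hY, hY_trace, hGY⟩ := hG.exists_posSemidef_trace_eq_one_trace_mul_eq_eigenvalues j
  have hupper := hfoc Y hY hY_trace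
  have hlower := hG.iInf_eigenvalues_mul_trace_le_trace_mul hXs
  rw [Matrix.mul_sub, trace_sub, hGY, hj] at hupper
  rw [hXstr, mul_one] at hlower
  rw [trace_mul_comm]
  linarith

/-- If a rank-`r*` optimal solution `X*` of a convex differentiable `f`
over the spectrahedron satisfies the first-order optimality condition, then
`⟨X*, ∇f(X*)⟩ = λ_n(∇f(X*))`, the smallest eigenvalue of the gradient. -/
theorem inner_opt_grad_eq_min_eigenvalue {n r : ℕ}
    (f : Matrix (Fin n) (Fin n) ℝ → ℝ)
    (hf : ConvexOn ℝ Set.univ f)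
    {Xs G : Matrix (Fin n) (Fin n) ℝ}
    (hXs : Xs.PosSemidef) (hXstr : Xs.trace = 1)
    (hrank : Xs.rank = r)
    (hmin : ∀ Y : Matrix (Fin n) (Fin n) ℝ, Y.PosSemidef → Y.trace = 1 → f Xs ≤ f Y)
    (hG : G.IsHermitian)
    (hgrad : ∀ H : Matrix (Fin n) (Fin n) ℝ,
      HasDerivAt (fun t : ℝ => f (Xs + t • H)) ((G * H).trace) 0)
    (hfoc : ∀ X : Matrix (Fin n) (Fin n) ℝ, X.PosSemidef → X.trace = 1 →
      0 ≤ (G * (X - Xs)).trace) :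
    (Xs * G).trace = ⨅ j, hG.eigenvalues j :=
  inner_opt_grad_eq_min_eigenvalue_general hXs hXstr hG hfoc
end

section
/- Let Y be symmetric positive definite with ordered eigenvalues λ_1(Y) ≥ ... ≥ λ_n(Y), let Z_+ = Y / Tr(Y), and let X_+ = (1-ε) Y^r/a + (ε/(n-r))(I - V^r (V^r)^T) where Y^r is the top-rank-r part of Y, a = Σ_{i=1}^r λ_i(Y), and V^r the corresponding eigenvectors. If ε ∈ (0, 3/4], then for every j ≤ r, the j-th eigenvalue of log(Z_+) - log(X_+) is at most 2ε, and for every j > r it is at most log((n-r)λ_{r+1}(Y)/(ε Tr(Y))). -/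
/-!
In the common eigenbasis everything reduces to scalar inequalities between the sorted eigenvalues
`λ_j` of `Y`. For `j < r`, `D j = log (a / b) - log (1 - ε)`, and `a ≤ b` because `a` is a
partial sum of the positive eigenvalues whose full sum is `b = Tr Y`. For `j ≥ r`,
`D j = log ((n - r) λ_j / (ε b))`, which increases with `λ_j ≤ λ_{r+1}`.
-/

open Matrix

/-- Concavity of `log` on the chord from `1` to `1 / 4`, together with `log 4 < 3 / 2`. -/
theorem Real.neg_log_one_sub_le_two_mul {ε : ℝ} (h0 : 0 ≤ ε) (h1 : ε ≤ 3 / 4) :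
    -Real.log (1 - ε) ≤ 2 * ε := by
  have hchord := strictConcaveOn_log_Ioi.concaveOn.2 (Set.mem_Ioi.2 one_pos)
    (Set.mem_Ioi.2 (by norm_num : (0 : ℝ) < 1 / 4)) (by linarith : 0 ≤ 1 - 4 / 3 * ε)
    (by positivity : 0 ≤ 4 / 3 * ε) (by ring)
  have hquarter : Real.log (1 / 4) = -2 * Real.log 2 := by
    rw [one_div, Real.log_inv, show (4 : ℝ) = 2 ^ 2 by norm_num, Real.log_pow]; push_cast; ring
  have hlog2 := Real.log_two_lt_d9
  simp only [smul_eq_mul, Real.log_one, mul_zero, zero_add, hquarter] at hchord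
  rw [show (1 - 4 / 3 * ε) * 1 + 4 / 3 * ε * (1 / 4) = 1 - ε by ring] at hchord
  norm_num at hlog2
  nlinarith

section eigDesc

variable {n : ℕ} {A : Matrix (Fin n) (Fin n) ℝ}

theorem eigDesc_antitone (hA : A.IsHermitian) : Antitone (eigDesc hA) :=
  fun _ _ hij => Tuple.monotone_sort hA.eigenvalues (Fin.rev_le_rev.2 hij)

theorem sum_eigDesc (hA : A.IsHermitian) : ∑ i, eigDesc hA i = A.trace := by
  rw [hA.trace_eq_sum_eigenvalues]
  exact Fintype.sum_equiv (Fin.revPerm.trans (Tuple.sort hA.eigenvalues)) _ _ fun _ => rfl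

theorem eigDesc_pos (hA : A.PosDef) (i : Fin n) : 0 < eigDesc hA.1 i :=
  hA.eigenvalues_pos _

theorem sum_eigDesc_le_trace (hA : A.PosDef) (s : Finset (Fin n)) :
    ∑ i ∈ s, eigDesc hA.1 i ≤ A.trace :=
  sum_eigDesc hA.1 ▸ Finset.sum_le_univ_sum_of_nonneg fun i => (eigDesc_pos hA i).le

end eigDesc

theorem lowRank_update_log_eig_bounds_general {n r : ℕ} (hrn : r < n)
    {Y : Matrix (Fin n) (Fin n) ℝ} (hY : Y.PosDef)
    {ε : ℝ} (hε : 0 < ε) (hε' : ε ≤ 3 / 4)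
    (a b : ℝ)
    (ha : a = ∑ i ∈ Finset.univ.filter (fun i : Fin n => (i : ℕ) < r), eigDesc hY.1 i)
    (hb : b = Y.trace)
    (D : Fin n → ℝ)
    (hD : ∀ j : Fin n, D j =
      if (j : ℕ) < r then
        Real.log (eigDesc hY.1 j / b) - Real.log ((1 - ε) * eigDesc hY.1 j / a)
      else
        Real.log (eigDesc hY.1 j / b) - Real.log (ε / ((n : ℝ) - (r : ℝ)))) :
    (∀ j : Fin n, (j : ℕ) < r → D j ≤ 2 * ε) ∧
    (∀ j : Fin n, r ≤ (j : ℕ) →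
      D j ≤ Real.log (((n : ℝ) - (r : ℝ)) * eigDesc hY.1 ⟨r, hrn⟩ / (ε * b))) := by
  have hev := eigDesc_pos hY
  have hb0 : 0 < b :=
    hb ▸ sum_eigDesc hY.1 ▸ Finset.sum_pos (fun i _ => hev i) ⟨⟨r, hrn⟩, by simp⟩
  have hab : a ≤ b := ha ▸ hb ▸ sum_eigDesc_le_trace hY _
  have hnr : (0 : ℝ) < n - r := sub_pos.2 (by exact_mod_cast hrn)
  refine ⟨fun j hj => ?_, fun j hj => ?_⟩
  · have ha0 : 0 < a := ha ▸ Finset.sum_pos (fun i _ => hev i) ⟨j, by simpa using hj⟩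
    have h1ε : 0 < 1 - ε := by linarith
    calc D j = Real.log (a / b) + -Real.log (1 - ε) := by
          rw [hD, if_pos hj, Real.log_div (hev j).ne' hb0.ne',
            Real.log_div (mul_pos h1ε (hev j)).ne' ha0.ne',
            Real.log_mul h1ε.ne' (hev j).ne', Real.log_div ha0.ne' hb0.ne']
          ring
      _ ≤ 0 + 2 * ε := add_le_add (Real.log_nonpos (by positivity) ((div_le_one hb0).2 hab))
          (Real.neg_log_one_sub_le_two_mul hε.le hε')
      _ = 2 * ε := zero_add _
  · calc D j = Real.log ((n - r) * eigDesc hY.1 j / (ε * b)) := by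
          rw [hD, if_neg (not_lt.2 hj),
            ← Real.log_div (div_pos (hev j) hb0).ne' (div_pos hε hnr).ne']
          congr 1
          field_simp
      _ ≤ _ := by
          have := hev j
          gcongr
          exact eigDesc_antitone hY.1 (Fin.mk_le_of_le_val hj)

/-- Let `Y ≻ 0` with ordered eigenvalues `λ_1 ≥ ... ≥ λ_n`, and let
`Z₊ = Y / Tr Y`, `X₊` the `ε`-perturbed normalized rank-`r` truncation. The eigenvalues
of `log Z₊ - log X₊` in the common eigenbasis are `D j = log(λ_j/b) - log((1-ε)λ_j/a)`
for `j ≤ r` and `D j = log(λ_j/b) - log(ε/(n-r))` for `j > r` (with `b = Tr Y`,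
`a = ∑_{i ≤ r} λ_i`). If `ε ∈ (0, 3/4]` then `D j ≤ 2ε` for `j ≤ r` and
`D j ≤ log((n-r) λ_{r+1} / (ε b))` for `j > r`. -/
theorem lowRank_update_log_eig_bounds {n r : ℕ} (hr : 1 ≤ r) (hrn : r < n)
    {Y : Matrix (Fin n) (Fin n) ℝ} (hY : Y.PosDef)
    {ε : ℝ} (hε : 0 < ε) (hε' : ε ≤ 3 / 4)
    (a b : ℝ)
    (ha : a = ∑ i ∈ Finset.univ.filter (fun i : Fin n => (i : ℕ) < r), eigDesc hY.1 i)
    (hb : b = Y.trace)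
    (D : Fin n → ℝ)
    (hD : ∀ j : Fin n, D j =
      if (j : ℕ) < r then
        Real.log (eigDesc hY.1 j / b) - Real.log ((1 - ε) * eigDesc hY.1 j / a)
      else
        Real.log (eigDesc hY.1 j / b) - Real.log (ε / ((n : ℝ) - (r : ℝ)))) :
    (∀ j : Fin n, (j : ℕ) < r → D j ≤ 2 * ε) ∧
    (∀ j : Fin n, r ≤ (j : ℕ) →
      D j ≤ Real.log (((n : ℝ) - (r : ℝ)) * eigDesc hY.1 ⟨r, hrn⟩ / (ε * b))) :=
  lowRank_update_log_eig_bounds_general hrn hY hε hε' a b ha hb D hD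
end

section
/- Concavity-based trace-log bound: for symmetric matrices X ∈ S_n positive definite with unit trace and any symmetric matrix G, -log(Tr(exp(log X - ηG))) ≤ -Tr(X(log X - ηG)) + Tr(X log X) = η⟨X, G⟩, for any η > 0. -/
/-!
Write `X = U diag(p) Uᴴ` and `M = log X - ηG = V diag(ν) Vᴴ`, and let `W = Uᴴ V`. Then
`Tr(X M) = ∑ᵢⱼ pᵢ Wᵢⱼ² νⱼ` and `Tr(X log X) = ∑ᵢ pᵢ log pᵢ`, where `(Wᵢⱼ²)` is doubly stochastic
and `∑ pᵢ = Tr X = 1`. Jensen's inequality for `exp` with the weights `pᵢ Wᵢⱼ²` at the points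
`νⱼ - log pᵢ` gives `exp (Tr(X M) - Tr(X log X)) ≤ ∑ⱼ exp νⱼ = Tr(exp M)`.
-/

open Matrix

noncomputable def matLog {n : ℕ} {A : Matrix (Fin n) (Fin n) ℝ} (hA : A.IsHermitian) :
    Matrix (Fin n) (Fin n) ℝ :=
  (hA.eigenvectorUnitary : Matrix (Fin n) (Fin n) ℝ) *
    Matrix.diagonal (fun i => Real.log (hA.eigenvalues i)) *
    (hA.eigenvectorUnitary : Matrix (Fin n) (Fin n) ℝ)ᴴ

noncomputable def matExp {n : ℕ} {A : Matrix (Fin n) (Fin n) ℝ} (hA : A.IsHermitian) :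
    Matrix (Fin n) (Fin n) ℝ :=
  (hA.eigenvectorUnitary : Matrix (Fin n) (Fin n) ℝ) *
    Matrix.diagonal (fun i => Real.exp (hA.eigenvalues i)) *
    (hA.eigenvectorUnitary : Matrix (Fin n) (Fin n) ℝ)ᴴ

lemma matLog_isHermitian {n : ℕ} {A : Matrix (Fin n) (Fin n) ℝ} (hA : A.IsHermitian) :
    (matLog hA).IsHermitian := by
  unfold matLog Matrix.IsHermitian
  simp [Matrix.conjTranspose_mul, Matrix.mul_assoc, Matrix.diagonal_conjTranspose]

lemma smul_isHermitian {n : ℕ} {G : Matrix (Fin n) (Fin n) ℝ} (hG : G.IsHermitian)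
    (η : ℝ) : (η • G).IsHermitian := by
  unfold Matrix.IsHermitian at *
  rw [Matrix.conjTranspose_smul, hG, star_trivial]

namespace Matrix

variable {ι : Type*} [Fintype ι] [DecidableEq ι]

theorem trace_conj_diagonal_mul_conj_diagonal (U V : Matrix ι ι ℝ) (p ν : ι → ℝ) :
    ((U * diagonal p * Uᴴ) * (V * diagonal ν * Vᴴ)).trace
      = ∑ i, ∑ j, p i * (Uᴴ * V) i j ^ 2 * ν j := by
  have hcycle : ((U * diagonal p * Uᴴ) * (V * diagonal ν * Vᴴ)).trace
      = (diagonal p * (Uᴴ * V) * diagonal ν * (Uᴴ * V)ᴴ).trace := by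
    rw [conjTranspose_mul, conjTranspose_conjTranspose]
    simp only [Matrix.mul_assoc]
    rw [trace_mul_comm]
    simp only [Matrix.mul_assoc]
  rw [hcycle]
  generalize Uᴴ * V = W
  simp only [trace, diag, mul_apply (M := diagonal p * W * diagonal ν), mul_diagonal, diagonal_mul,
    conjTranspose_apply, star_trivial]
  exact Finset.sum_congr rfl fun i _ => Finset.sum_congr rfl fun j _ => by ring

theorem trace_conj_diagonal {U : Matrix ι ι ℝ} (hU : U ∈ unitaryGroup ι ℝ) (d : ι → ℝ) :
    (U * diagonal d * Uᴴ).trace = ∑ i, d i := by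
  rw [trace_mul_cycle, ← star_eq_conjTranspose, (mem_unitaryGroup_iff').mp hU, one_mul,
    trace_diagonal]

theorem map_sq_mem_doublyStochastic {U : Matrix ι ι ℝ} (hU : U ∈ unitaryGroup ι ℝ) :
    U.map (· ^ 2) ∈ doublyStochastic ℝ ι := by
  refine mem_doublyStochastic_iff_sum.mpr ⟨fun i j => sq_nonneg _, fun i => ?_, fun j => ?_⟩
  · simpa [mul_apply, one_apply, sq] using congr_fun (congr_fun (mem_unitaryGroup_iff.mp hU) i) i
  · simpa [mul_apply, one_apply, sq] using congr_fun (congr_fun (mem_unitaryGroup_iff'.mp hU) j) j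

theorem IsHermitian.eq_conj_diagonal_eigenvalues {A : Matrix ι ι ℝ} (hA : A.IsHermitian) :
    A = (hA.eigenvectorUnitary : Matrix ι ι ℝ) * diagonal hA.eigenvalues *
      (hA.eigenvectorUnitary : Matrix ι ι ℝ)ᴴ := by
  conv_lhs => rw [hA.spectral_theorem]
  simp [star_eq_conjTranspose]

theorem IsHermitian.trace_mul_eq_sum_eigenvalues {A B : Matrix ι ι ℝ} (hA : A.IsHermitian)
    (hB : B.IsHermitian) :
    (A * B).trace = ∑ i, ∑ j, hA.eigenvalues i *
      ((hA.eigenvectorUnitary : Matrix ι ι ℝ)ᴴ * hB.eigenvectorUnitary) i j ^ 2 *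
        hB.eigenvalues j := by
  rw [← trace_conj_diagonal_mul_conj_diagonal, ← hA.eq_conj_diagonal_eigenvalues,
    ← hB.eq_conj_diagonal_eigenvalues]

end Matrix

open Real in
theorem Real.sum_mul_sub_sum_mul_log_le_log_sum_exp {ι : Type*} [Fintype ι] [DecidableEq ι]
    {p : ι → ℝ} (hp : ∀ i, 0 < p i) (hp1 : ∑ i, p i = 1) {B : Matrix ι ι ℝ}
    (hB : B ∈ doublyStochastic ℝ ι) (ν : ι → ℝ) :
    ∑ i, ∑ j, p i * B i j * ν j - ∑ i, p i * log (p i) ≤ log (∑ j, exp (ν j)) := by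
  have hweights : ∑ ij : ι × ι, p ij.1 * B ij.1 ij.2 = 1 := by
    simp [Fintype.sum_prod_type, ← Finset.mul_sum, sum_row_of_mem_doublyStochastic hB, hp1]
  have hmean : ∑ ij : ι × ι, p ij.1 * B ij.1 ij.2 * (ν ij.2 - log (p ij.1))
      = ∑ i, ∑ j, p i * B i j * ν j - ∑ i, p i * log (p i) := by
    simp only [Fintype.sum_prod_type, mul_sub, Finset.sum_sub_distrib]
    congr 1
    refine Finset.sum_congr rfl fun i _ => ?_
    rw [← Finset.sum_mul, ← Finset.mul_sum, sum_row_of_mem_doublyStochastic hB, mul_one]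
  have hexp : ∑ ij : ι × ι, p ij.1 * B ij.1 ij.2 * exp (ν ij.2 - log (p ij.1))
      = ∑ j, exp (ν j) := by
    rw [Fintype.sum_prod_type, Finset.sum_comm]
    refine Finset.sum_congr rfl fun j _ => ?_
    have hcancel : ∀ i, p i * B i j * exp (ν j - log (p i)) = B i j * exp (ν j) := fun i => by
      rw [exp_sub, exp_log (hp i)]
      field_simp [(hp i).ne']
    simp only [hcancel, ← Finset.sum_mul, sum_col_of_mem_doublyStochastic hB, one_mul]
  have hjensen := convexOn_exp.map_sum_le (t := Finset.univ)
    (p := fun ij : ι × ι => ν ij.2 - log (p ij.1))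
    (fun ij _ => mul_nonneg (hp ij.1).le (nonneg_of_mem_doublyStochastic hB)) hweights
    (fun _ _ => Set.mem_univ _)
  simp only [smul_eq_mul, hmean, hexp] at hjensen
  exact (le_log_iff_exp_le ((exp_pos _).trans_le hjensen)).mpr hjensen

theorem trace_matExp {n : ℕ} {A : Matrix (Fin n) (Fin n) ℝ} (hA : A.IsHermitian) :
    (matExp hA).trace = ∑ i, Real.exp (hA.eigenvalues i) :=
  trace_conj_diagonal hA.eigenvectorUnitary.2 _

theorem trace_mul_matLog {n : ℕ} {A : Matrix (Fin n) (Fin n) ℝ} (hA : A.IsHermitian) :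
    (A * matLog hA).trace = ∑ i, hA.eigenvalues i * Real.log (hA.eigenvalues i) := by
  have hUU : (hA.eigenvectorUnitary : Matrix (Fin n) (Fin n) ℝ)ᴴ * hA.eigenvectorUnitary = 1 :=
    mem_unitaryGroup_iff'.mp hA.eigenvectorUnitary.2
  have h := trace_conj_diagonal_mul_conj_diagonal
    (hA.eigenvectorUnitary : Matrix (Fin n) (Fin n) ℝ) hA.eigenvectorUnitary hA.eigenvalues (fun i => Real.log (hA.eigenvalues i))
  rw [← hA.eq_conj_diagonal_eigenvalues, hUU] at h
  rw [matLog, h]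
  simp [one_apply]

theorem neg_log_trace_exp_le_general {n : ℕ} {X G : Matrix (Fin n) (Fin n) ℝ}
    (hX : X.PosDef) (hXtr : X.trace = 1) (hG : G.IsHermitian) {η : ℝ} :
    -Real.log ((matExp ((matLog_isHermitian hX.1).sub (smul_isHermitian hG η))).trace)
        ≤ -(X * (matLog hX.1 - η • G)).trace + (X * matLog hX.1).trace ∧
      -(X * (matLog hX.1 - η • G)).trace + (X * matLog hX.1).trace
        = η * (X * G).trace := by
  refine ⟨?_, by rw [Matrix.mul_sub, trace_sub, Matrix.mul_smul, trace_smul, smul_eq_mul]; ring⟩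
  set hM := (matLog_isHermitian hX.1).sub (smul_isHermitian hG η)
  have hp1 : ∑ i, hX.1.eigenvalues i = 1 := by simpa [hX.1.trace_eq_sum_eigenvalues] using hXtr
  have hW : (hX.1.eigenvectorUnitary : Matrix (Fin n) (Fin n) ℝ)ᴴ * hM.eigenvectorUnitary
      ∈ unitaryGroup (Fin n) ℝ :=
    Submonoid.mul_mem _ (Unitary.star_mem hX.1.eigenvectorUnitary.2) hM.eigenvectorUnitary.2
  have hgibbs := Real.sum_mul_sub_sum_mul_log_le_log_sum_exp hX.eigenvalues_pos hp1
    (map_sq_mem_doublyStochastic hW) hM.eigenvalues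
  simp only [map_apply] at hgibbs
  rw [hX.1.trace_mul_eq_sum_eigenvalues hM, trace_mul_matLog, trace_matExp]
  linarith

/-- For `X ≻ 0` symmetric with `Tr X = 1`, symmetric `G` and `η > 0`:
`-log(Tr(exp(log X - ηG))) ≤ -Tr(X(log X - ηG)) + Tr(X log X) = η ⟨X, G⟩`. -/
theorem neg_log_trace_exp_le {n : ℕ} {X G : Matrix (Fin n) (Fin n) ℝ}
    (hX : X.PosDef) (hXtr : X.trace = 1) (hG : G.IsHermitian) {η : ℝ} (hη : 0 < η) :
    -Real.log ((matExp ((matLog_isHermitian hX.1).sub (smul_isHermitian hG η))).trace)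
        ≤ -(X * (matLog hX.1 - η • G)).trace + (X * matLog hX.1).trace ∧
      -(X * (matLog hX.1 - η • G)).trace + (X * matLog hX.1).trace
        = η * (X * G).trace :=
  neg_log_trace_exp_le_general hX hXtr hG
end
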